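/- arXiv:math/0405489 — 4 statements merged into one kernel-verified Lean document; each statement's English description precedes it below -/
import Mathlib

section
/- Let p and q be coprime positive integers and let u, v be integers with up + vq = 1. Let m, n, ℓ be positive integers with m − pℓ > 0, set N = qm + pn, and let s be a positive integer. Then the number of pairs (x, y) ∈ ℤ² satisfying qx + py = s, my − nx > 0 and x(n + qℓ) − y(m − pℓ) > 0 equals, as a real number, −1 + sℓ/N + {s(um − vn − ℓ)/N} + {s(vn − um)/N}. -/
lemma floor_int_div_real (a b : ℤ) (hb : 0 < b) : ⌊(a : ℝ) / (b : ℝ)⌋ = a / b := by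
  have hb' : (0:ℝ) < (b:ℝ) := by exact_mod_cast hb
  rw [Int.floor_eq_iff]
  constructor
  · rw [le_div_iff₀ hb']
    exact_mod_cast (Int.le_ediv_iff_mul_le hb).mp le_rfl
  · rw [div_lt_iff₀ hb']
    exact_mod_cast (Int.ediv_lt_iff_lt_mul hb).mp (lt_add_one _)

lemma ediv_sub_one_add_neg_ediv (b N : ℤ) (hN : 0 < N) :
    (b - 1) / N + (-b) / N = -1 := by
  have hr1 : 0 ≤ (-b) % N := Int.emod_nonneg _ hN.ne'
  have hr2 : (-b) % N < N := Int.emod_lt_of_pos _ hN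
  have hdm : N * ((-b) / N) + (-b) % N = -b := Int.mul_ediv_add_emod _ _
  have hb1 : b - 1 = (N - 1 - (-b) % N) + N * (-((-b) / N) - 1) := by ring_nf; linarith
  rw [hb1, Int.add_mul_ediv_left _ _ hN.ne', Int.ediv_eq_zero_of_lt (by omega) (by omega)]
  ring

/-- Lemma 3.2: counting the lattice points of the open cone generated by
`(m - p*l, n + q*l)` and `(m, n)` lying on the fiber `q*x + p*y = s`. -/
theorem card_cone_fiber (p q u v m n l s : ℤ)
    (hp : 0 < p) (hq : 0 < q) (hcop : IsCoprime p q)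
    (hbez : u * p + v * q = 1)
    (hm : 0 < m) (hn : 0 < n) (hl : 0 < l) (hml : 0 < m - p * l)
    (hs : 0 < s) :
    (({z : ℤ × ℤ | q * z.1 + p * z.2 = s ∧ 0 < m * z.2 - n * z.1 ∧
        0 < z.1 * (n + q * l) - z.2 * (m - p * l)}).ncard : ℝ) =
      -1 + ((s * l : ℤ) : ℝ) / ((q * m + p * n : ℤ) : ℝ)
        + Int.fract (((s * (u * m - v * n - l) : ℤ) : ℝ) / ((q * m + p * n : ℤ) : ℝ))
        + Int.fract (((s * (v * n - u * m) : ℤ) : ℝ) / ((q * m + p * n : ℤ) : ℝ)) := by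
  set N : ℤ := q * m + p * n with hNdef
  set a : ℤ := s * (u * m - v * n - l) with hadef
  set b : ℤ := s * (u * m - v * n) with hbdef
  have hN : 0 < N := by positivity
  have hba : b - a = s * l := by rw [hadef, hbdef]; ring
  have hab : a < b := by nlinarith [mul_pos hs hl]
  -- the set as an image
  have hset : {z : ℤ × ℤ | q * z.1 + p * z.2 = s ∧ 0 < m * z.2 - n * z.1 ∧
        0 < z.1 * (n + q * l) - z.2 * (m - p * l)} =
      (fun t : ℤ => (s * v + p * t, s * u - q * t)) '' (Set.Ioc (a / N) ((b - 1) / N)) := by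
    ext ⟨x, y⟩
    simp only [Set.mem_setOf_eq, Set.mem_image, Set.mem_Ioc, Prod.mk.injEq]
    constructor
    · rintro ⟨h1, h2, h3⟩
      refine ⟨u * x - v * y, ⟨?_, ?_⟩, ?_, ?_⟩
      · rw [Int.ediv_lt_iff_lt_mul hN]
        have key : (u * x - v * y) * N - a = x * (n + q * l) - y * (m - p * l) := by
          rw [hadef, hNdef]
          linear_combination (x * n - y * m) * hbez + (u * m - v * n - l) * h1
        linarith
      · rw [Int.le_ediv_iff_mul_le hN]
        have key : b - (u * x - v * y) * N = m * y - n * x := by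
          rw [hbdef, hNdef]
          linear_combination (y * m - x * n) * hbez - (u * m - v * n) * h1
        omega
      · linear_combination (-v) * h1 + x * hbez
      · linear_combination (-u) * h1 + y * hbez
    · rintro ⟨t, ⟨ht1, ht2⟩, hx, hy⟩
      rw [Int.ediv_lt_iff_lt_mul hN] at ht1
      rw [Int.le_ediv_iff_mul_le hN] at ht2
      subst hx hy
      refine ⟨by linear_combination s * hbez, ?_, ?_⟩
      · have key : m * (s * u - q * t) - n * (s * v + p * t) = b - t * N := by
          rw [hbdef, hNdef]; ring
        omega
      · have key : (s * v + p * t) * (n + q * l) - (s * u - q * t) * (m - p * l)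
            = t * N - a + (s * l) * (u * p + v * q - 1) := by
          rw [hadef, hNdef]; ring
        rw [key, hbez]
        linarith
  rw [hset]
  have hinj : Function.Injective (fun t : ℤ => (s * v + p * t, s * u - q * t)) := by
    intro t1 t2 h
    simp only [Prod.mk.injEq] at h
    have := h.1
    have hpt : p * t1 = p * t2 := by linarith
    exact mul_left_cancel₀ hp.ne' hpt
  rw [Set.ncard_image_of_injective _ hinj, ← Finset.coe_Ioc, Set.ncard_coe_finset,
    Int.card_Ioc]
  -- now the arithmetic
  have hNR : (0:ℝ) < (N:ℝ) := by exact_mod_cast hN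
  have hfa : Int.fract ((a : ℝ) / (N : ℝ)) = (a : ℝ) / N - ((a / N : ℤ) : ℝ) := by
    rw [Int.fract, floor_int_div_real a N hN]
  have hbneg : s * (v * n - u * m) = -b := by rw [hbdef]; ring
  have hfb : Int.fract (((s * (v * n - u * m) : ℤ) : ℝ) / (N : ℝ))
      = ((-b : ℤ) : ℝ) / N - (((-b) / N : ℤ) : ℝ) := by
    rw [hbneg, Int.fract, floor_int_div_real (-b) N hN]
  have hle : a / N ≤ (b - 1) / N := Int.ediv_le_ediv hN (by omega)
  have htn : (((b - 1) / N - a / N).toNat : ℤ) = (b - 1) / N - a / N :=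
    Int.toNat_of_nonneg (by omega)
  have hkey : (b - 1) / N + (-b) / N = -1 := ediv_sub_one_add_neg_ediv b N hN
  have hcast : ((((b - 1) / N - a / N).toNat : ℕ) : ℝ) = (((b - 1) / N : ℤ) : ℝ) - ((a / N : ℤ) : ℝ) := by
    rw [← Int.cast_natCast, htn, Int.cast_sub]
  rw [hcast, hfa, hfb]
  have hsum : ((s * l : ℤ) : ℝ) / N + (a : ℝ) / N + ((-b : ℤ) : ℝ) / N = 0 := by
    rw [← add_div, ← add_div, div_eq_zero_iff]
    left
    push_cast
    have : (s:ℝ) * l = (b:ℝ) - a := by exact_mod_cast hba.symm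
    linarith
  have hkeyR : (((b - 1) / N : ℤ) : ℝ) + (((-b) / N : ℤ) : ℝ) = -1 := by exact_mod_cast hkey
  linarith
end

section
/- Let r ≥ 1 and 1 ≤ j ≤ r, let p, q, ℓ⁺ and p_i, q_i, k_i (for 1 ≤ i ≤ r) be positive integers, and set ℓ⁻ = Σ_{i=1}^r q_i k_i and D_j = q_j(ℓ⁺ + Σ_{i=1}^j p_i k_i) + p_j Σ_{i=j+1}^r q_i k_i. Assume that p_b q_j ≤ p_j q_b for all 1 ≤ b ≤ j−1, that p_j > pq·q_j, and that either (p > 1 and q > 1) or ℓ⁺ > ℓ⁻. Then, as rational numbers, 1 − (p + q)/(ℓ⁺ + pq·ℓ⁻) > 1 − (p_j + q_j)/D_j. -/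
/-! The slope ordering `p_b q_j ≤ p_j q_b` gives
`q_j · Σ_{i ≤ j} p_i k_i ≤ p_j · Σ_{i ≤ j} q_i k_i`, hence `D_j ≤ q_j ℓ⁺ + p_j ℓ⁻`, and it remains
to compare `(p + q)(q_j ℓ⁺ + p_j ℓ⁻)` with `(p_j + q_j)(ℓ⁺ + pq ℓ⁻)`. Their difference is
`(p_j - pq q_j)(ℓ⁺ - ℓ⁻) + (p - 1)(q - 1)(q_j ℓ⁺ + p_j ℓ⁻)`, positive when `ℓ⁺ > ℓ⁻`, and also
`ℓ⁺(p_j - pq q_j) + ℓ⁺ q_j (p - 1)(q - 1) + ℓ⁻(p_j((p - 1)(q - 1) - 1) + pq q_j)`,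
positive when `p, q ≥ 2` because then `(p - 1)(q - 1) ≥ 1`. -/

open Finset

theorem Finset.sum_Icc_one_add_sum_Icc {M : Type*} [AddCommMonoid M] (f : ℕ → M) {j r : ℕ}
    (hjr : j ≤ r) :
    ∑ i ∈ Icc 1 j, f i + ∑ i ∈ Icc (j + 1) r, f i = ∑ i ∈ Icc 1 r, f i := by
  simpa only [← Icc_add_one_left_eq_Ioc, zero_add] using sum_Ioc_consecutive f j.zero_le hjr

theorem mul_sum_le_mul_sum_of_mul_le_mul {R ι : Type*} [CommRing R] [PartialOrder R]
    [IsOrderedRing R] (s : Finset ι) (p q k : ι → R) (j : ι) (hk : ∀ i ∈ s, 0 ≤ k i)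
    (hslope : ∀ i ∈ s, p i * q j ≤ p j * q i) :
    q j * ∑ i ∈ s, p i * k i ≤ p j * ∑ i ∈ s, q i * k i := by
  rw [mul_sum, mul_sum]
  refine sum_le_sum fun i hi => ?_
  calc q j * (p i * k i) = p i * q j * k i := by ring
    _ ≤ p j * q i * k i := mul_le_mul_of_nonneg_right (hslope i hi) (hk i hi)
    _ = p j * (q i * k i) := by ring

theorem sum_Icc_mul_nonneg {R : Type*} [Semiring R] [PartialOrder R] [IsOrderedRing R]
    {f g : ℕ → R} {r : ℕ} (hf : ∀ i, 1 ≤ i → i ≤ r → 0 < f i)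
    (hg : ∀ i, 1 ≤ i → i ≤ r → 0 < g i)
    {a b : ℕ} (ha : 1 ≤ a) (hb : b ≤ r) : 0 ≤ ∑ i ∈ Icc a b, f i * g i :=
  sum_nonneg fun i hi => by
    obtain ⟨h1, h2⟩ := mem_Icc.1 hi
    exact mul_nonneg (hf i (ha.trans h1) (h2.trans hb)).le (hg i (ha.trans h1) (h2.trans hb)).le

theorem mul_sum_Icc_le_mul_sum_Icc {R : Type*} [CommRing R] [PartialOrder R] [IsOrderedRing R]
    (p q k : ℕ → R) {j : ℕ} (hk : ∀ i ∈ Icc 1 j, 0 ≤ k i)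
    (hord : ∀ b, 1 ≤ b → b < j → p b * q j ≤ p j * q b) :
    q j * ∑ i ∈ Icc 1 j, p i * k i ≤ p j * ∑ i ∈ Icc 1 j, q i * k i := by
  refine mul_sum_le_mul_sum_of_mul_le_mul _ p q k j hk fun i hi => ?_
  obtain ⟨h1, h2⟩ := mem_Icc.1 hi
  rcases h2.lt_or_eq with hij | rfl
  exacts [hord i h1 hij, le_rfl]

section SpliceInequality

variable {P Q ℓ L a b : ℤ}

theorem splice_ineq_of_lt (hP : 0 < P) (hQ : 0 < Q) (hℓ : 0 < ℓ) (hL : 0 ≤ L) (hb : 0 < b)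
    (hdet : P * Q * b < a) (hLℓ : L < ℓ) :
    (P + Q) * (b * ℓ + a * L) < (a + b) * (ℓ + P * Q * L) := by
  have hPQ : 0 ≤ (P - 1) * (Q - 1) := mul_nonneg (by omega) (by omega)
  have hmain : 0 < (a - P * Q * b) * (ℓ - L) := mul_pos (by omega) (by omega)
  have hrest : 0 ≤ (P - 1) * (Q - 1) * (b * ℓ + a * L) := by
    have : 0 < a := lt_trans (by positivity) hdet
    positivity
  linear_combination hmain + hrest

theorem splice_ineq_of_one_lt (hℓ : 0 < ℓ) (hL : 0 ≤ L) (hb : 0 < b)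
    (hdet : P * Q * b < a) (hP : 1 < P) (hQ : 1 < Q) :
    (P + Q) * (b * ℓ + a * L) < (a + b) * (ℓ + P * Q * L) := by
  have hPQ : 1 ≤ (P - 1) * (Q - 1) := one_le_mul_of_one_le_of_one_le (by omega) (by omega)
  have ha : 0 ≤ a := (lt_trans (by positivity) hdet).le
  have hmain : 0 < ℓ * (a - P * Q * b) := mul_pos hℓ (by omega)
  have hℓb : 0 ≤ ℓ * b * ((P - 1) * (Q - 1)) := by positivity
  have hLrest : 0 ≤ L * (a * ((P - 1) * (Q - 1) - 1) + P * Q * b) :=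
    mul_nonneg hL (add_nonneg (mul_nonneg ha (by omega)) (by positivity))
  linear_combination hmain + hℓb + hLrest

end SpliceInequality

theorem virtual_spectral_value_comparison_general (r : ℕ)
    (j : ℕ) (hj1 : 1 ≤ j) (hjr : j ≤ r)
    (P Q lp : ℤ) (hP : 0 < P) (hQ : 0 < Q) (hlp : 0 < lp)
    (p q k : ℕ → ℤ)
    (hp : ∀ i, 1 ≤ i → i ≤ r → 0 < p i)
    (hq : ∀ i, 1 ≤ i → i ≤ r → 0 < q i)
    (hk : ∀ i, 1 ≤ i → i ≤ r → 0 < k i)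
    (hord : ∀ b, 1 ≤ b → b < j → p b * q j ≤ p j * q b)
    (hdet : P * Q * q j < p j)
    (hcase : (1 < P ∧ 1 < Q) ∨ (∑ i ∈ Finset.Icc 1 r, q i * k i) < lp) :
    1 - ((P + Q : ℤ) : ℚ) / ((lp + P * Q * ∑ i ∈ Finset.Icc 1 r, q i * k i : ℤ) : ℚ)
      > 1 - ((p j + q j : ℤ) : ℚ) /
          ((q j * (lp + ∑ i ∈ Finset.Icc 1 j, p i * k i)
            + p j * ∑ i ∈ Finset.Icc (j + 1) r, q i * k i : ℤ) : ℚ) := by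
  set L := ∑ i ∈ Icc 1 r, q i * k i
  set S₁ := ∑ i ∈ Icc 1 j, p i * k i
  set S₂ := ∑ i ∈ Icc (j + 1) r, q i * k i
  have hsplit : ∑ i ∈ Icc 1 j, q i * k i + S₂ = L := sum_Icc_one_add_sum_Icc _ hjr
  have hqj := hq j hj1 hjr
  have hpj := hp j hj1 hjr
  have hS₁ : 0 ≤ S₁ := sum_Icc_mul_nonneg hp hk le_rfl hjr
  have hS₂ : 0 ≤ S₂ := sum_Icc_mul_nonneg hq hk (by omega) le_rfl
  have hL : 0 ≤ L := hsplit ▸ add_nonneg (sum_Icc_mul_nonneg hq hk le_rfl hjr) hS₂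
  have hD : q j * (lp + S₁) + p j * S₂ ≤ q j * lp + p j * L := by
    have hk' : ∀ i ∈ Icc 1 j, 0 ≤ k i := fun i hi =>
      (hk i (mem_Icc.1 hi).1 ((mem_Icc.1 hi).2.trans hjr)).le
    linear_combination mul_sum_Icc_le_mul_sum_Icc p q k hk' hord + p j * hsplit
  have hkey : (P + Q) * (q j * lp + p j * L) < (p j + q j) * (lp + P * Q * L) :=
    hcase.elim (fun h => splice_ineq_of_one_lt hlp hL hqj hdet h.1 h.2)
      (splice_ineq_of_lt hP hQ hlp hL hqj hdet)
  have hA : 0 < lp + P * Q * L := by nlinarith [mul_pos hP hQ]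
  have hDpos : 0 < q j * (lp + S₁) + p j * S₂ := by
    nlinarith [mul_pos hqj hlp, mul_nonneg hqj.le hS₁, mul_nonneg hpj.le hS₂]
  rw [gt_iff_lt, sub_lt_sub_iff_left, div_lt_div_iff₀ (mod_cast hA) (mod_cast hDpos)]
  exact_mod_cast (mul_le_mul_of_nonneg_left hD (by omega)).trans_lt hkey

/-- Proposition 6.4 (part 2): if `p, q > 1` or `ℓ⁺ > ℓ⁻`, then the virtual
spectral value `α_{i⁻} = 1 - (p+q)/(ℓ⁺ + pq ℓ⁻)` at the vertex carrying the
horizontal edge is strictly larger than each virtual spectral value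
`α_j = 1 - (p_j + q_j)/D_j` of the Newton polygon attached to the right. -/
theorem virtual_spectral_value_comparison (r : ℕ) (hr : 1 ≤ r)
    (j : ℕ) (hj1 : 1 ≤ j) (hjr : j ≤ r)
    (P Q lp : ℤ) (hP : 0 < P) (hQ : 0 < Q) (hlp : 0 < lp)
    (p q k : ℕ → ℤ)
    (hp : ∀ i, 1 ≤ i → i ≤ r → 0 < p i)
    (hq : ∀ i, 1 ≤ i → i ≤ r → 0 < q i)
    (hk : ∀ i, 1 ≤ i → i ≤ r → 0 < k i)
    (hord : ∀ b, 1 ≤ b → b < j → p b * q j ≤ p j * q b)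
    (hdet : P * Q * q j < p j)
    (hcase : (1 < P ∧ 1 < Q) ∨ (∑ i ∈ Finset.Icc 1 r, q i * k i) < lp) :
    1 - ((P + Q : ℤ) : ℚ) / ((lp + P * Q * ∑ i ∈ Finset.Icc 1 r, q i * k i : ℤ) : ℚ)
      > 1 - ((p j + q j : ℤ) : ℚ) /
          ((q j * (lp + ∑ i ∈ Finset.Icc 1 j, p i * k i)
            + p j * ∑ i ∈ Finset.Icc (j + 1) r, q i * k i : ℤ) : ℚ) :=
  virtual_spectral_value_comparison_general r j hj1 hjr P Q lp hP hQ hlp p q k hp hq hk hord hdet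
    hcase
end

section
/- Let r ≥ 1 and let p_i, q_i, k_i (for 1 ≤ i ≤ r), P and ℓ⁺ be positive integers. Set q₀ = 1, p₀ = P, ℓ⁻ = Σ_{i=1}^r q_i k_i, n_t = Σ_{i=t+1}^r q_i k_i for 0 ≤ t ≤ r−1 (so n₀ = ℓ⁻), and Δ_t = p_{t+1}q_t − p_t q_{t+1} for 0 ≤ t ≤ r−1. Define μ⁺ = (ℓ⁺ + ℓ⁻)(ℓ⁺ − 1) + Σ_{i=1}^r [p_i(Σ_{j=i}^r q_j k_j) + q_i(ℓ⁺ + Σ_{j=1}^{i−1} p_j k_j)]·k_i − (ℓ⁺ + Σ_{i=1}^r p_i k_i) + 1 and μ⁻ = (ℓ⁺ + ℓ⁻)(ℓ⁺ − 1) + (Pℓ⁻ + ℓ⁺)(ℓ⁻ − 1) + 1. Then, in ℚ: μ⁺ − μ⁻ = Σ_{t=0}^{r−1} [n_t(n_t − 1)/(q_t q_{t+1})]·Δ_t. -/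
/-!
Write `n_t = ∑_{i > t} q_i k_i`, so that `n_t - n_{t+1} = q_{t+1} k_{t+1}` and `n_r = 0`.
The `t`-th summand on the right equals `p_{t+1} n_t (n_t - 1) / q_{t+1} - p_t n_t (n_t - 1) / q_t`;
replacing `n_t` by `n_{t+1}` in the first term turns the sum into a telescoping sum of
`t ↦ p_t n_t (n_t - 1) / q_t` plus the corrections `p_i k_i (2 n_i + q_i k_i - 1)`, `1 ≤ i ≤ r`.
Since `q_0 = 1` and `p_0 = P`, the right side is `∑ p_i k_i (2 n_i + q_i k_i - 1) - P n_0 (n_0 - 1)`.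
Expanding `μ⁺ - μ⁻` gives the same, once the double sum `∑_i q_i k_i ∑_{j < i} p_j k_j` is
rewritten as `∑_j p_j k_j n_j`.
-/

open Finset

section Intervals

variable {M : Type*} [AddCommMonoid M]

lemma sum_Icc_eq_add_sum_Icc_succ (f : ℕ → M) {a b : ℕ} (h : a ≤ b) :
    ∑ i ∈ Icc a b, f i = f a + ∑ i ∈ Icc (a + 1) b, f i := by
  rw [Icc_add_one_left_eq_Ioc, add_sum_Ioc_eq_sum_Icc h]

lemma sum_range_succ_eq_sum_Icc_one (f : ℕ → M) (r : ℕ) :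
    ∑ t ∈ range r, f (t + 1) = ∑ i ∈ Icc 1 r, f i := by
  rw [range_eq_Ico, sum_Ico_add', ← Ico_add_one_right_eq_Icc, zero_add]

end Intervals

lemma sum_mul_sum_Ico_eq_sum_mul_sum_Icc {R : Type*} [NonUnitalCommSemiring R]
    (b c : ℕ → R) (r : ℕ) :
    ∑ i ∈ Icc 1 r, b i * ∑ j ∈ Ico 1 i, c j = ∑ j ∈ Icc 1 r, c j * ∑ i ∈ Icc (j + 1) r, b i := by
  simp only [mul_sum]
  rw [sum_comm' (t' := Icc 1 r) (s' := fun j => Icc (j + 1) r)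
    (fun i j => by simp only [mem_Icc, mem_Ico]; omega)]
  exact sum_congr rfl fun _ _ => sum_congr rfl fun _ _ => mul_comm _ _

lemma mu_plus_sub_mu_minus_eq {R : Type*} [CommRing R] (p q k : ℕ → R) (P lp : R) (r : ℕ) :
    ((lp + ∑ i ∈ Icc 1 r, q i * k i) * (lp - 1)
        + ∑ i ∈ Icc 1 r,
            (p i * (∑ j ∈ Icc i r, q j * k j)
              + q i * (lp + ∑ j ∈ Ico 1 i, p j * k j)) * k i
        - (lp + ∑ i ∈ Icc 1 r, p i * k i) + 1)
      - ((lp + ∑ i ∈ Icc 1 r, q i * k i) * (lp - 1)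
        + (P * (∑ i ∈ Icc 1 r, q i * k i) + lp)
            * ((∑ i ∈ Icc 1 r, q i * k i) - 1) + 1)
    = ∑ i ∈ Icc 1 r, p i * k i * (2 * ∑ j ∈ Icc (i + 1) r, q j * k j + q i * k i - 1)
      - P * (∑ i ∈ Icc 1 r, q i * k i) * ((∑ i ∈ Icc 1 r, q i * k i) - 1) := by
  have hsummand : ∀ i ∈ Icc 1 r,
      (p i * (∑ j ∈ Icc i r, q j * k j) + q i * (lp + ∑ j ∈ Ico 1 i, p j * k j)) * k i
        = p i * k i * (q i * k i) + p i * k i * ∑ j ∈ Icc (i + 1) r, q j * k j + lp * (q i * k i)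
          + q i * k i * ∑ j ∈ Ico 1 i, p j * k j := by
    intro i hi
    rw [sum_Icc_eq_add_sum_Icc_succ _ (mem_Icc.mp hi).2]
    ring
  have hexpand : ∀ i, p i * k i * (2 * ∑ j ∈ Icc (i + 1) r, q j * k j + q i * k i - 1)
      = 2 * (p i * k i * ∑ j ∈ Icc (i + 1) r, q j * k j) + p i * k i * (q i * k i) - p i * k i :=
    fun i => by ring
  rw [sum_congr rfl hsummand, sum_add_distrib, sum_add_distrib, sum_add_distrib, ← mul_sum,
    sum_mul_sum_Ico_eq_sum_mul_sum_Icc]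
  simp only [hexpand, sum_sub_distrib, sum_add_distrib, ← mul_sum]
  ring

lemma sum_range_tail_det_eq_telescope {K : Type*} [Field K] (p q k n : ℕ → K) (r : ℕ)
    (hq : ∀ t ≤ r, q t ≠ 0) (hn : ∀ t < r, n t = q (t + 1) * k (t + 1) + n (t + 1)) :
    ∑ t ∈ range r, n t * (n t - 1) / (q t * q (t + 1)) * (p (t + 1) * q t - p t * q (t + 1))
      = p r * n r * (n r - 1) / q r - p 0 * n 0 * (n 0 - 1) / q 0
        + ∑ t ∈ range r, p (t + 1) * k (t + 1) * (2 * n (t + 1) + q (t + 1) * k (t + 1) - 1) := by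
  set F : ℕ → K := fun t => p t * n t * (n t - 1) / q t
  have hstep : ∀ t ∈ range r,
      n t * (n t - 1) / (q t * q (t + 1)) * (p (t + 1) * q t - p t * q (t + 1))
        = (F (t + 1) - F t)
          + p (t + 1) * k (t + 1) * (2 * n (t + 1) + q (t + 1) * k (t + 1) - 1) := by
    intro t ht
    have ht : t < r := mem_range.mp ht
    have hqt := hq t ht.le
    have hqt' := hq (t + 1) ht
    simp only [F]
    rw [hn t ht]
    field_simp
    ring
  rw [sum_congr rfl hstep, sum_add_distrib, sum_range_sub]

theorem lemma_7_4_general (r : ℕ)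
    (p q k : ℕ → ℤ) (P lp : ℤ)
    (hp0 : p 0 = P) (hq0 : q 0 = 1)
    (hq : ∀ i, 1 ≤ i → i ≤ r → 0 < q i)
    (mup mum : ℤ)
    (hmup : mup = (lp + ∑ i ∈ Finset.Icc 1 r, q i * k i) * (lp - 1)
        + ∑ i ∈ Finset.Icc 1 r,
            (p i * (∑ j ∈ Finset.Icc i r, q j * k j)
              + q i * (lp + ∑ j ∈ Finset.Ico 1 i, p j * k j)) * k i
        - (lp + ∑ i ∈ Finset.Icc 1 r, p i * k i) + 1)
    (hmum : mum = (lp + ∑ i ∈ Finset.Icc 1 r, q i * k i) * (lp - 1)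
        + (P * (∑ i ∈ Finset.Icc 1 r, q i * k i) + lp)
            * ((∑ i ∈ Finset.Icc 1 r, q i * k i) - 1) + 1) :
    ((mup - mum : ℤ) : ℚ) =
      ∑ t ∈ Finset.range r,
        (((∑ i ∈ Finset.Icc (t + 1) r, q i * k i)
            * ((∑ i ∈ Finset.Icc (t + 1) r, q i * k i) - 1) : ℤ) : ℚ)
          / ((q t * q (t + 1) : ℤ) : ℚ)
          * ((p (t + 1) * q t - p t * q (t + 1) : ℤ) : ℚ) := by
  have hq_ne : ∀ t ≤ r, (q t : ℚ) ≠ 0 := by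
    intro t ht
    rcases t.eq_zero_or_pos with rfl | ht0
    · simp [hq0]
    · exact_mod_cast (hq t ht0 ht).ne'
  have htail : ∀ t < r, ∑ i ∈ Icc (t + 1) r, ((q i : ℚ) * k i)
      = q (t + 1) * k (t + 1) + ∑ i ∈ Icc (t + 1 + 1) r, ((q i : ℚ) * k i) :=
    fun t ht => sum_Icc_eq_add_sum_Icc_succ _ ht
  subst hmup hmum
  push_cast
  have htelescope := sum_range_tail_det_eq_telescope (fun t => (p t : ℚ)) (fun t => (q t : ℚ))
    (fun t => (k t : ℚ)) (fun t => ∑ i ∈ Icc (t + 1) r, (q i : ℚ) * k i) r hq_ne htail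
  beta_reduce at htelescope
  rw [mu_plus_sub_mu_minus_eq, htelescope,
    sum_range_succ_eq_sum_Icc_one (fun i => (p i : ℚ) * k i *
      (2 * ∑ j ∈ Icc (i + 1) r, (q j : ℚ) * k j + q i * k i - 1))]
  simp only [Icc_eq_empty_of_lt (lt_add_one r), sum_empty, hp0, hq0, Int.cast_one, div_one]
  ring

/-- Lemma 7.4: `μ⁺ - μ⁻ = Σ_{t=0}^{r-1} n_t(n_t - 1)/(q_t q_{t+1}) · Δ_t`,
where `q₀ = 1`, `p₀ = P`, `n_t = Σ_{i=t+1}^r q_i k_i` and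
`Δ_t = p_{t+1} q_t - p_t q_{t+1}`. -/
theorem lemma_7_4 (r : ℕ) (hr : 1 ≤ r)
    (p q k : ℕ → ℤ) (P lp : ℤ) (hP : 0 < P) (hlp : 0 < lp)
    (hp0 : p 0 = P) (hq0 : q 0 = 1)
    (hp : ∀ i, 1 ≤ i → i ≤ r → 0 < p i)
    (hq : ∀ i, 1 ≤ i → i ≤ r → 0 < q i)
    (hk : ∀ i, 1 ≤ i → i ≤ r → 0 < k i)
    (mup mum : ℤ)
    (hmup : mup = (lp + ∑ i ∈ Finset.Icc 1 r, q i * k i) * (lp - 1)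
        + ∑ i ∈ Finset.Icc 1 r,
            (p i * (∑ j ∈ Finset.Icc i r, q j * k j)
              + q i * (lp + ∑ j ∈ Finset.Ico 1 i, p j * k j)) * k i
        - (lp + ∑ i ∈ Finset.Icc 1 r, p i * k i) + 1)
    (hmum : mum = (lp + ∑ i ∈ Finset.Icc 1 r, q i * k i) * (lp - 1)
        + (P * (∑ i ∈ Finset.Icc 1 r, q i * k i) + lp)
            * ((∑ i ∈ Finset.Icc 1 r, q i * k i) - 1) + 1) :
    ((mup - mum : ℤ) : ℚ) =
      ∑ t ∈ Finset.range r,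
        (((∑ i ∈ Finset.Icc (t + 1) r, q i * k i)
            * ((∑ i ∈ Finset.Icc (t + 1) r, q i * k i) - 1) : ℤ) : ℚ)
          / ((q t * q (t + 1) : ℤ) : ℚ)
          * ((p (t + 1) * q t - p t * q (t + 1) : ℤ) : ℚ) :=
  lemma_7_4_general r p q k P lp hp0 hq0 hq mup mum hmup hmum
end

section
/- Let d, ℓ⁺, ℓ⁻, p, q, p₁, q₁ be positive integers and assume that either (p ≥ 2 and q ≥ 2) or ℓ⁺ > ℓ⁻. Then q₁(d² − ℓ⁻) + (q₁ℓ⁺ + p₁ℓ⁻)(ℓ⁺ + pq·ℓ⁻ − ℓ⁻(p + q))(ℓ⁻ − 1) ≥ 0. -/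
/-!
Write `M = ℓ⁺ + pqℓ⁻ − ℓ⁻(p + q) = ℓ⁺ + ℓ⁻((p − 1)(q − 1) − 1)`. Either hypothesis forces `M ≥ 1`,
and `q₁ℓ⁺ + p₁ℓ⁻ ≥ q₁`, so the second summand is at least `q₁(ℓ⁻ − 1)`; together with the first
summand this leaves `q₁(d² − 1) ≥ 0`.
-/

theorem splice_factor_eq (lp lm p q : ℤ) :
    lp + p * q * lm - lm * (p + q) = lp + lm * ((p - 1) * (q - 1) - 1) := by
  ring

theorem one_le_splice_factor_of_two_le (lp lm p q : ℤ) (hlp : 0 < lp) (hlm : 0 < lm)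
    (hp : 2 ≤ p) (hq : 2 ≤ q) : 1 ≤ lp + p * q * lm - lm * (p + q) := by
  have hpq : 1 ≤ (p - 1) * (q - 1) := one_le_mul_of_one_le_of_one_le (by omega) (by omega)
  rw [splice_factor_eq]
  nlinarith

theorem one_le_splice_factor_of_lt (lp lm p q : ℤ) (hlm : 0 ≤ lm) (hp : 0 < p) (hq : 0 < q)
    (hlt : lm < lp) : 1 ≤ lp + p * q * lm - lm * (p + q) := by
  have hpq : 0 ≤ (p - 1) * (q - 1) := mul_nonneg (by omega) (by omega)
  rw [splice_factor_eq]
  nlinarith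

theorem mul_le_mul_mul_of_le_of_one_le {α : Type*} [Semiring α] [PartialOrder α]
    [IsOrderedRing α] {c a m k : α} (hca : c ≤ a) (hc : 0 ≤ c) (hm : 1 ≤ m) (hk : 0 ≤ k) :
    c * k ≤ a * m * k :=
  mul_le_mul_of_nonneg_right (hca.trans (le_mul_of_one_le_right (hc.trans hca) hm)) hk

/-- The positivity claim in the proof of Theorem 7.7: if `p, q ≥ 2` or
`ℓ⁺ > ℓ⁻`, then the numerator of the coefficient of the first determinant is
nonnegative. -/
theorem thm_7_7_positivity (d lp lm p q p1 q1 : ℤ)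
    (hd : 0 < d) (hlp : 0 < lp) (hlm : 0 < lm)
    (hp : 0 < p) (hq : 0 < q) (hp1 : 0 < p1) (hq1 : 0 < q1)
    (hcase : (2 ≤ p ∧ 2 ≤ q) ∨ lm < lp) :
    0 ≤ q1 * (d ^ 2 - lm)
        + (q1 * lp + p1 * lm) * (lp + p * q * lm - lm * (p + q)) * (lm - 1) := by
  have hM : 1 ≤ lp + p * q * lm - lm * (p + q) := by
    rcases hcase with ⟨hp2, hq2⟩ | hlt
    · exact one_le_splice_factor_of_two_le lp lm p q hlp hlm hp2 hq2
    · exact one_le_splice_factor_of_lt lp lm p q hlm.le hp hq hlt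
  have hA : q1 ≤ q1 * lp + p1 * lm := by nlinarith
  have hsecond := mul_le_mul_mul_of_le_of_one_le hA hq1.le hM (by omega : (0 : ℤ) ≤ lm - 1)
  have hd2 : 1 ≤ d ^ 2 := one_le_pow₀ (by omega)
  nlinarith
end
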